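/- Let a, b be coprime positive integers and let K be the subgroup of ℤ^b generated by a·e_1, …, a·e_b and the all-ones vector 1 = (1,…,1). Then the quotient group ℤ^b/K is isomorphic to (ℤ/aℤ)^{b−1}, and for each k with 0 ≤ k < b, every coset of K in ℤ^b contains exactly one k-skeletal chip configuration. -/

import Mathlib

/-!
Write `m j = ⌊j a / b⌋`. Coprimality gives `m s + m (b - s) + 1 = a` for `0 < s < b`, so firing a
set `S` adds the constant `a - 1 - m (b - #S)` to every vertex and removes `a` from `S`: moves
preserve cosets of `K`, and `K` is the kernel of `D ↦ (D (i + 1) - D 0 mod a)ᵢ`. Firing lowers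
the chip count, borrowing raises it, and `k`-stable configurations have entries in `[0, a)`. So
from a representative reduced mod `a` one fires down to a `k`-stable configuration and then
borrows up to a `k`-skeletal one. For uniqueness, if `D` and `G` are `k`-stable in one coset and
`G` has more chips, some borrow of `D` is already `k`-stable: either `G` itself is a borrow of
`D`, or `G` admits a legal firing, and firing the vertices of `G` above `m y` for the least
suitable `y` gives a `k`-stable configuration strictly between the two. Equal chip counts force
equality, again by coprimality.
-/

/-- The cluster-fire move `φ_S` for the quantized rational model on the
complete graph (`c = 1`): each `i ∈ S` loses `1 + ⌊(b−s)·a/b⌋` chips and each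
`j ∉ S` gains `⌊s·a/b⌋` chips, where `s = |S|`. -/
def cfire (a b : ℕ) (S : Finset (Fin b)) (D : Fin b → ℤ) : Fin b → ℤ :=
  fun i =>
    if i ∈ S then D i - 1 - (((b - S.card) * a / b : ℕ) : ℤ)
    else D i + ((S.card * a / b : ℕ) : ℤ)

/-- The borrow move `β_S = φ_S⁻¹`. -/
def cborrow (a b : ℕ) (S : Finset (Fin b)) (D : Fin b → ℤ) : Fin b → ℤ :=
  fun i =>
    if i ∈ S then D i + 1 + (((b - S.card) * a / b : ℕ) : ℤ)
    else D i - ((S.card * a / b : ℕ) : ℤ)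

/-- `D` is `k`-stable: `D ≥ 0` and no `k`-firing move `φ_S` (with
`0 < |S| ≤ k+1`) is legal on `D`. -/
def KStable (a b k : ℕ) (D : Fin b → ℤ) : Prop :=
  (∀ i, 0 ≤ D i) ∧ ∀ S : Finset (Fin b), S.Nonempty → S.card ≤ k + 1 →
    ¬ (∀ i, 0 ≤ cfire a b S D i)

/-- `D` is `k`-skeletal: `D` is `k`-stable and no legal nonempty borrow move
produces a `k`-stable configuration. -/
def KSkeletal (a b k : ℕ) (D : Fin b → ℤ) : Prop :=
  KStable a b k D ∧ ∀ T : Finset (Fin b), T.Nonempty →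
    (∀ i, 0 ≤ cborrow a b T D i) → ¬ KStable a b k (cborrow a b T D)

/-- The subgroup `K` of `ℤ^b` generated by `a·e_1, …, a·e_b` and the all-ones
vector. -/
def Kgrp (a b : ℕ) : AddSubgroup (Fin b → ℤ) :=
  AddSubgroup.closure
    ({fun _ => 1} ∪ Set.range fun i : Fin b => fun j => if j = i then (a : ℤ) else 0)

open Finset

def floorMulDiv (a b j : ℕ) : ℤ := ((j * a / b : ℕ) : ℤ)

section FloorMulDiv

variable {a b : ℕ}

lemma mul_floorMulDiv_le (j : ℕ) : (b : ℤ) * floorMulDiv a b j ≤ j * a := by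
  unfold floorMulDiv
  exact_mod_cast Nat.mul_div_le (j * a) b

lemma lt_mul_floorMulDiv_add (hb : 0 < b) (j : ℕ) :
    (j : ℤ) * a < b * floorMulDiv a b j + b := by
  unfold floorMulDiv
  have := Nat.lt_mul_div_succ (j * a) hb
  push_cast at this ⊢
  linarith

lemma floorMulDiv_self (hb : 0 < b) : floorMulDiv a b b = a := by
  simp [floorMulDiv, Nat.mul_div_cancel_left a hb]

lemma floorMulDiv_mono {u v : ℕ} (h : u ≤ v) : floorMulDiv a b u ≤ floorMulDiv a b v := by
  unfold floorMulDiv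
  exact_mod_cast Nat.div_le_div_right (Nat.mul_le_mul_right a h)

lemma floorMulDiv_add_floorMulDiv_le (hb : 0 < b) (u v : ℕ) :
    floorMulDiv a b u + floorMulDiv a b v ≤ floorMulDiv a b (u + v) := by
  have hb' : (0 : ℤ) < b := by exact_mod_cast hb
  have := mul_floorMulDiv_le (a := a) (b := b) u
  have := mul_floorMulDiv_le (a := a) (b := b) v
  have := lt_mul_floorMulDiv_add (a := a) hb (u + v)
  have : (b : ℤ) * (floorMulDiv a b u + floorMulDiv a b v) < b * (floorMulDiv a b (u + v) + 1) := by
    push_cast at *; linarith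
  linarith [lt_of_mul_lt_mul_left this hb'.le]

lemma floorMulDiv_add_le (hb : 0 < b) (u v : ℕ) :
    floorMulDiv a b (u + v) ≤ floorMulDiv a b u + floorMulDiv a b v + 1 := by
  have hb' : (0 : ℤ) < b := by exact_mod_cast hb
  have := mul_floorMulDiv_le (a := a) (b := b) (u + v)
  have := lt_mul_floorMulDiv_add (a := a) hb u
  have := lt_mul_floorMulDiv_add (a := a) hb v
  have : (b : ℤ) * floorMulDiv a b (u + v) < b * (floorMulDiv a b u + floorMulDiv a b v + 2) := by
    push_cast at *; linarith
  linarith [lt_of_mul_lt_mul_left this hb'.le]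

lemma floorMulDiv_lt (ha : 0 < a) {j : ℕ} (hj : j < b) : floorMulDiv a b j < a := by
  have h := mul_floorMulDiv_le (a := a) (b := b) j
  have : (j : ℤ) * a < b * a :=
    mul_lt_mul_of_pos_right (by exact_mod_cast hj) (by exact_mod_cast ha)
  exact lt_of_mul_lt_mul_left (h.trans_lt this) (Int.natCast_nonneg b)

/-- Coprimality makes `j * a / b` inexact for `0 < j < b`, so the two floors lose exactly one. -/
lemma floorMulDiv_add_floorMulDiv_of_add_eq (hab : a.Coprime b) {s t : ℕ} (hst : s + t = b)
    (hs : 0 < s) (ht : 0 < t) : floorMulDiv a b s + floorMulDiv a b t + 1 = a := by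
  have hb : 0 < b := by omega
  have hb' : (0 : ℤ) < b := by exact_mod_cast hb
  have hstrict : (b : ℤ) * floorMulDiv a b s < s * a := by
    have hndvd : ¬ b ∣ s * a := fun h =>
      absurd (Nat.le_of_dvd hs (hab.symm.dvd_of_dvd_mul_right h)) (by omega)
    unfold floorMulDiv
    exact_mod_cast Nat.mul_div_lt_iff_not_dvd.mpr hndvd
  have := mul_floorMulDiv_le (a := a) (b := b) t
  have := lt_mul_floorMulDiv_add (a := a) hb s
  have := lt_mul_floorMulDiv_add (a := a) hb t
  have hsum : (s : ℤ) * a + t * a = b * a := by rw [← add_mul]; exact_mod_cast congrArg (· * a) hst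
  have h1 : (b : ℤ) * (floorMulDiv a b s + floorMulDiv a b t) < b * a := by linarith
  have h2 : (b : ℤ) * a < b * (floorMulDiv a b s + floorMulDiv a b t + 2) := by linarith
  linarith [lt_of_mul_lt_mul_left h1 hb'.le, lt_of_mul_lt_mul_left h2 hb'.le]

end FloorMulDiv

lemma mem_Kgrp_iff {a b : ℕ} {v : Fin b → ℤ} :
    v ∈ Kgrp a b ↔ ∃ c : ℤ, ∀ i, (a : ℤ) ∣ v i - c := by
  constructor
  · intro hv
    induction hv using AddSubgroup.closure_induction with
    | mem x hx =>
      rcases hx with rfl | ⟨j, rfl⟩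
      · exact ⟨1, fun i => by simp⟩
      · exact ⟨0, fun i => by by_cases h : i = j <;> simp [h]⟩
    | zero => exact ⟨0, fun i => by simp⟩
    | add x y _ _ hx hy =>
      obtain ⟨c, hc⟩ := hx
      obtain ⟨d, hd⟩ := hy
      exact ⟨c + d, fun i => by simpa [add_sub_add_comm] using dvd_add (hc i) (hd i)⟩
    | neg x _ hx =>
      obtain ⟨c, hc⟩ := hx
      exact ⟨-c, fun i => by
        simpa [neg_add_eq_sub, sub_eq_add_neg, add_comm] using (hc i).neg_right⟩
  · rintro ⟨c, hc⟩
    have hv : v = c • (fun _ => (1 : ℤ)) +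
        ∑ j, ((v j - c) / a) • fun i => if i = j then (a : ℤ) else 0 := by
      funext i
      simp [Finset.sum_apply, Int.ediv_mul_cancel (hc i)]
    have hone : (fun _ => (1 : ℤ)) ∈ Kgrp a b := AddSubgroup.subset_closure (Or.inl rfl)
    have hsingle (j : Fin b) : (fun i => if i = j then (a : ℤ) else 0) ∈ Kgrp a b :=
      AddSubgroup.subset_closure (Or.inr ⟨j, rfl⟩)
    rw [hv]
    exact add_mem (zsmul_mem hone c) (sum_mem fun j _ => zsmul_mem (hsingle j) _)

section Moves

variable {a b : ℕ}

@[simp] lemma cfire_cborrow (S : Finset (Fin b)) (D : Fin b → ℤ) :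
    cfire a b S (cborrow a b S D) = D := by
  funext i
  simp only [cfire, cborrow]
  split_ifs <;> ring

@[simp] lemma cborrow_cfire (S : Finset (Fin b)) (D : Fin b → ℤ) :
    cborrow a b S (cfire a b S D) = D := by
  funext i
  simp only [cfire, cborrow]
  split_ifs <;> ring

/-- Off `S` the gain `⌊s a / b⌋` equals `a - 1 - ⌊(b - s) a / b⌋`; this is where coprimality
enters. -/
lemma cfire_apply (hab : a.Coprime b) {S : Finset (Fin b)} (hS : S.Nonempty) (D : Fin b → ℤ)
    (i : Fin b) :
    cfire a b S D i = D i + (a - 1 - floorMulDiv a b (b - #S)) - if i ∈ S then (a : ℤ) else 0 := by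
  by_cases hi : i ∈ S
  · simp only [cfire, hi, if_true, floorMulDiv]
    ring
  · have hlt : #S < b := by simpa using card_lt_univ_of_notMem hi
    have := floorMulDiv_add_floorMulDiv_of_add_eq hab (Nat.add_sub_cancel' hlt.le)
      hS.card_pos (by omega)
    simp only [cfire, hi, if_false, floorMulDiv] at this ⊢
    linarith

lemma cfire_sub_mem_Kgrp (hab : a.Coprime b) {S : Finset (Fin b)} (hS : S.Nonempty)
    (D : Fin b → ℤ) : cfire a b S D - D ∈ Kgrp a b := by
  refine mem_Kgrp_iff.mpr ⟨a - 1 - floorMulDiv a b (b - #S), fun i => ?_⟩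
  rw [Pi.sub_apply, cfire_apply hab hS]
  split_ifs
  exacts [⟨-1, by ring⟩, ⟨0, by ring⟩]

lemma cborrow_sub_mem_Kgrp (hab : a.Coprime b) {S : Finset (Fin b)} (hS : S.Nonempty)
    (D : Fin b → ℤ) : cborrow a b S D - D ∈ Kgrp a b := by
  simpa using neg_mem (cfire_sub_mem_Kgrp hab hS (cborrow a b S D))

lemma sum_cfire (hab : a.Coprime b) {S : Finset (Fin b)} (hS : S.Nonempty) (D : Fin b → ℤ) :
    ∑ i, cfire a b S D i = ∑ i, D i + b * (a - 1 - floorMulDiv a b (b - #S)) - #S * a := by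
  simp only [cfire_apply hab hS, sum_sub_distrib, sum_add_distrib, sum_const, card_univ,
    Fintype.card_fin, Int.nsmul_eq_mul, mul_one, sum_ite_mem, univ_inter]
  ring

lemma sum_cfire_bounds (hab : a.Coprime b) {S : Finset (Fin b)} (hS : S.Nonempty)
    (D : Fin b → ℤ) :
    ∑ i, D i - b ≤ ∑ i, cfire a b S D i ∧ ∑ i, cfire a b S D i < ∑ i, D i := by
  have hb : 0 < b := by simpa using hS.card_pos.trans_le (card_le_univ S)
  have hcast : ((b - #S : ℕ) : ℤ) = b - #S := by
    rw [Nat.cast_sub (by simpa using card_le_univ S)]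
  have h1 := mul_floorMulDiv_le (a := a) (b := b) (b - #S)
  have h2 := lt_mul_floorMulDiv_add (a := a) hb (b - #S)
  rw [hcast] at h1 h2
  rw [sum_cfire hab hS]
  constructor <;> nlinarith

end Moves

def numAbove {b : ℕ} (D : Fin b → ℤ) (q : ℤ) : ℕ := #{i | q < D i}

section NumAbove

variable {b : ℕ}

lemma numAbove_le (D : Fin b → ℤ) (q : ℤ) : numAbove D q ≤ b :=
  (card_le_univ _).trans_eq (Fintype.card_fin b)

lemma numAbove_anti (D : Fin b → ℤ) {q q' : ℤ} (h : q ≤ q') : numAbove D q' ≤ numAbove D q :=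
  card_le_card fun i => by simpa using h.trans_lt

lemma card_filter_Ioc_add_numAbove_le (D : Fin b → ℤ) {lo hi : ℤ} (h : lo ≤ hi) :
    #{i | lo < D i ∧ D i ≤ hi} + numAbove D hi ≤ numAbove D lo := by
  rw [numAbove, numAbove, ← card_union_of_disjoint (disjoint_filter.mpr fun i _ hi' => by omega)]
  exact card_le_card fun i => by simp only [mem_union, mem_filter, mem_univ, true_and]; omega

lemma numAbove_le_of_eq_ite {W G : Fin b → ℤ} {c t : ℤ}
    (hW : ∀ i, W i = G i + (c - 1 - t) - if t < G i then c else 0) (q : ℤ) :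
    numAbove W q ≤ numAbove G (q + 1 + t) + #{i | q + 1 + t - c < G i ∧ G i ≤ t} := by
  refine (card_le_card fun i hi => ?_).trans (card_union_le _ _)
  simp only [mem_filter, mem_univ, true_and, mem_union] at hi ⊢
  rw [hW] at hi
  split_ifs at hi with h
  · left; linarith
  · right; constructor <;> linarith

end NumAbove

section Stability

variable {a b k : ℕ}

lemma le_numAbove_of_cfire_nonneg {S : Finset (Fin b)} {D : Fin b → ℤ}
    (h : ∀ i, 0 ≤ cfire a b S D i) : #S ≤ numAbove D (floorMulDiv a b (b - #S)) := by
  refine card_le_card fun i hi => ?_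
  have := h i
  simp only [cfire, hi, if_true] at this
  exact mem_filter.mpr ⟨mem_univ i, by unfold floorMulDiv; omega⟩

lemma exists_cfire_nonneg_of_le_numAbove {D : Fin b → ℤ} (hD : ∀ i, 0 ≤ D i) {σ : ℕ}
    (h : σ ≤ numAbove D (floorMulDiv a b (b - σ))) :
    ∃ S : Finset (Fin b), #S = σ ∧ ∀ i, 0 ≤ cfire a b S D i := by
  obtain ⟨S, hSsub, rfl⟩ := exists_subset_card_eq h
  refine ⟨S, rfl, fun i => ?_⟩
  by_cases hi : i ∈ S
  · have := (mem_filter.mp (hSsub hi)).2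
    unfold floorMulDiv at this
    simp only [cfire, hi, if_true]
    omega
  · simp only [cfire, hi, if_false]
    linarith [hD i, Int.natCast_nonneg (#S * a / b)]

/-- Firing `S` is legal exactly when every vertex of `S` exceeds `⌊(b - #S) a / b⌋`, since the
other vertices only gain chips. -/
lemma kStable_iff {D : Fin b → ℤ} :
    KStable a b k D ↔ (∀ i, 0 ≤ D i) ∧
      ∀ σ, 0 < σ → σ ≤ k + 1 → numAbove D (floorMulDiv a b (b - σ)) < σ := by
  refine ⟨fun ⟨hD, hS⟩ => ⟨hD, fun σ hσ hσk => ?_⟩, fun ⟨hD, hσ⟩ => ⟨hD, fun S hS hSk h => ?_⟩⟩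
  · by_contra! hle
    obtain ⟨S, rfl, hlegal⟩ := exists_cfire_nonneg_of_le_numAbove hD hle
    exact hS S (card_pos.mp hσ) hσk hlegal
  · exact (hσ #S hS.card_pos hSk).not_ge (le_numAbove_of_cfire_nonneg h)

lemma KStable.le_floorMulDiv {D : Fin b → ℤ} (hD : KStable a b k D) (i : Fin b) :
    D i ≤ floorMulDiv a b (b - 1) := by
  have h := (kStable_iff.mp hD).2 1 one_pos (by omega)
  by_contra! hi
  exact absurd h (not_lt.mpr (card_pos.mpr ⟨i, by simpa using hi⟩))

lemma KStable.lt (ha : 0 < a) {D : Fin b → ℤ} (hD : KStable a b k D) (i : Fin b) : D i < a :=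
  (hD.le_floorMulDiv i).trans_lt (floorMulDiv_lt ha (Nat.sub_lt i.pos one_pos))

end Stability

section FireAbove

variable {a b k : ℕ}

/-- `W` is `G` with its vertices above `t = ⌊y a / b⌋` fired. For a threshold index `σ ≤ y`, no
vertex of `G` is high enough to stay above it, and those coming from `(⌊(y - σ) a / b⌋, t]` number
fewer than `σ` by minimality of `y`; for `σ > y`, at most `y` come from below `t` and fewer than
`σ - y` from above it, by stability of `G`. -/
lemma KStable.kStable_of_eq_ite (ha : 0 < a) (hk : k < b) {G W : Fin b → ℤ}
    (hG : KStable a b k G) {y : ℕ} (hyb : y < b)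
    (hy : numAbove G (floorMulDiv a b y) = b - y)
    (hmin : ∀ w < y, numAbove G (floorMulDiv a b w) < b - w)
    (hW : ∀ i, W i = G i + (a - 1 - floorMulDiv a b y) -
      if floorMulDiv a b y < G i then (a : ℤ) else 0) :
    KStable a b k W := by
  have hb : 0 < b := by omega
  obtain ⟨hG0, hGσ⟩ := kStable_iff.mp hG
  have hya := floorMulDiv_lt ha hyb
  refine kStable_iff.mpr ⟨fun i => ?_, fun σ hσ hσk => ?_⟩
  · rw [hW]
    split_ifs <;> linarith [hG0 i]
  set t := floorMulDiv a b y
  set q := floorMulDiv a b (b - σ)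
  have hqa : q < a := floorMulDiv_lt ha (by omega)
  have hcount := numAbove_le_of_eq_ite hW q
  have hint := card_filter_Ioc_add_numAbove_le G (lo := q + 1 + t - a) (hi := t) (by linarith)
  rcases le_or_gt σ y with hσy | hyσ
  · have hsub : floorMulDiv a b (b - 1) ≤ q + 1 + t := by
      have := floorMulDiv_add_le (a := a) hb (b - σ) (σ - 1)
      rw [show b - σ + (σ - 1) = b - 1 by omega] at this
      linarith [floorMulDiv_mono (a := a) (b := b) (show σ - 1 ≤ y by omega)]
    have h1 := (numAbove_anti G hsub).trans_lt (hGσ 1 one_pos (by omega))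
    have hlo : floorMulDiv a b (y - σ) ≤ q + 1 + t - a := by
      have h₁ := floorMulDiv_add_le (a := a) hb (b - σ) σ
      have h₂ := floorMulDiv_add_floorMulDiv_le (a := a) hb (y - σ) σ
      rw [show b - σ + σ = b by omega, floorMulDiv_self hb] at h₁
      rw [show y - σ + σ = y by omega] at h₂
      linarith
    have h2 := numAbove_anti G hlo
    have h3 := hmin (y - σ) (by omega)
    omega
  · have hsub : floorMulDiv a b (b - (σ - y)) ≤ q + 1 + t := by
      have := floorMulDiv_add_le (a := a) hb (b - σ) y
      rw [show b - σ + y = b - (σ - y) by omega] at this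
      linarith
    have h1 := (numAbove_anti G hsub).trans_lt (hGσ (σ - y) (by omega) (by omega))
    have h2 := numAbove_le G (q + 1 + t - a)
    omega

/-- Fire the vertices above `⌊y a / b⌋` for the least `y` with `b - y` such vertices. -/
lemma KStable.exists_kStable_cfire (ha : 0 < a) (hab : a.Coprime b) (hk : k < b)
    {G : Fin b → ℤ} (hG : KStable a b k G) {S : Finset (Fin b)} (hS : S.Nonempty)
    (hlegal : ∀ i, 0 ≤ cfire a b S G i) :
    ∃ Y : Finset (Fin b), Y.Nonempty ∧ KStable a b k (cfire a b Y G) := by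
  classical
  have hSb : #S ≤ b := by simpa using card_le_univ S
  have hPS : b - (b - #S) ≤ numAbove G (floorMulDiv a b (b - #S)) := by
    rw [Nat.sub_sub_self hSb]
    exact le_numAbove_of_cfire_nonneg hlegal
  have hP : ∃ w, b - w ≤ numAbove G (floorMulDiv a b w) := ⟨_, hPS⟩
  set y := Nat.find hP
  have hyb : y < b := (Nat.find_min' hP hPS).trans_lt (by have := hS.card_pos; omega)
  have hmin : ∀ w < y, numAbove G (floorMulDiv a b w) < b - w := fun w hw =>
    not_le.mp (Nat.find_min hP hw)
  have hy : numAbove G (floorMulDiv a b y) = b - y := by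
    refine le_antisymm ?_ (Nat.find_spec hP)
    rcases Nat.eq_zero_or_pos y with hy0 | hy0
    · rw [hy0]
      exact numAbove_le G _
    · have := hmin (y - 1) (by omega)
      have := numAbove_anti G (floorMulDiv_mono (a := a) (b := b) (Nat.sub_le y 1))
      omega
  set Y : Finset (Fin b) := {i | floorMulDiv a b y < G i}
  have hYcard : #Y = b - y := hy
  have hY : Y.Nonempty := card_pos.mp (by omega)
  refine ⟨Y, hY, hG.kStable_of_eq_ite ha hk hyb hy hmin fun i => ?_⟩
  rw [cfire_apply hab hY, hYcard, Nat.sub_sub_self hyb.le]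
  simp [Y]

end FireAbove

section Cosets

variable {a b : ℕ}

lemma exists_nonneg_sub_mem_Kgrp (ha : 0 < a) (D : Fin b → ℤ) :
    ∃ E : Fin b → ℤ, (∀ i, 0 ≤ E i) ∧ E - D ∈ Kgrp a b :=
  ⟨fun i => D i % a, fun i => Int.emod_nonneg _ (by omega),
    mem_Kgrp_iff.mpr ⟨0, fun i => ⟨-(D i / a), by simp [Int.emod_def]⟩⟩⟩

lemma exists_eq_add_ite_sub (ha : 0 < a) {D G : Fin b → ℤ} (hD0 : ∀ i, 0 ≤ D i)
    (hDa : ∀ i, D i < a) (hG0 : ∀ i, 0 ≤ G i) (hGa : ∀ i, G i < a) (h : G - D ∈ Kgrp a b) :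
    ∃ (S : Finset (Fin b)) (r : ℤ), 0 < r ∧ r ≤ a ∧
      ∀ i, G i = D i + (if i ∈ S then (a : ℤ) else 0) - r := by
  obtain ⟨c, hc⟩ := mem_Kgrp_iff.mp h
  have ha' : (0 : ℤ) < a := by exact_mod_cast ha
  refine ⟨({i | D i ≤ G i} : Finset (Fin b)), a - c % a, by linarith [Int.emod_lt_of_pos c ha'],
    by linarith [Int.emod_nonneg c ha'.ne'], fun i => ?_⟩
  have hmod : (G i - D i) % a = c % a := (Int.modEq_iff_dvd.mpr (by simpa using hc i)).symm
  by_cases hi : D i ≤ G i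
  · rw [Int.emod_eq_of_lt (by linarith) (by linarith [hD0 i, hGa i])] at hmod
    simp only [mem_filter, mem_univ, true_and, hi, if_true]
    linarith
  · rw [← Int.add_emod_right, Int.emod_eq_of_lt (by linarith [hDa i, hG0 i]) (by linarith)] at hmod
    simp only [mem_filter, mem_univ, true_and, hi, if_false, add_zero]
    linarith

lemma exists_cfire_eq_add_const (ha : 0 < a) (hab : a.Coprime b) {D G : Fin b → ℤ}
    (hD0 : ∀ i, 0 ≤ D i) (hDa : ∀ i, D i < a) (hG0 : ∀ i, 0 ≤ G i) (hGa : ∀ i, G i < a)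
    (h : G - D ∈ Kgrp a b) (hlt : ∑ i, D i < ∑ i, G i) :
    ∃ S : Finset (Fin b), S.Nonempty ∧ ∃ e : ℤ, 0 ≤ e ∧ ∀ i, cfire a b S G i = D i + e := by
  obtain ⟨S, r, hr, -, hG⟩ := exists_eq_add_ite_sub ha hD0 hDa hG0 hGa h
  have hsum : ∑ i, G i = ∑ i, D i + #S * a - b * r := by
    simp [hG, sum_add_distrib, sum_sub_distrib]
  have hS : S.Nonempty := by
    rw [nonempty_iff_ne_empty]
    rintro rfl
    simp only [card_empty, Nat.cast_zero, zero_mul, add_zero] at hsum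
    nlinarith
  refine ⟨S, hS, a - 1 - floorMulDiv a b (b - #S) - r, ?_, fun i => ?_⟩
  · have hcast : ((b - #S : ℕ) : ℤ) = b - #S := by
      rw [Nat.cast_sub (by simpa using card_le_univ S)]
    have hfl := mul_floorMulDiv_le (a := a) (b := b) (b - #S)
    rw [hcast] at hfl
    have : (b : ℤ) * (r + floorMulDiv a b (b - #S)) < b * a := by linarith
    linarith [lt_of_mul_lt_mul_left this (Int.natCast_nonneg b)]
  · rw [cfire_apply hab hS, hG]
    ring

/-- `#S * a = b * r` with `0 < r ≤ a` forces `r = a` by coprimality, hence `S = univ`. -/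
lemma eq_of_sub_mem_Kgrp_of_sum_eq (ha : 0 < a) (hab : a.Coprime b) {D G : Fin b → ℤ}
    (hD0 : ∀ i, 0 ≤ D i) (hDa : ∀ i, D i < a) (hG0 : ∀ i, 0 ≤ G i) (hGa : ∀ i, G i < a)
    (h : G - D ∈ Kgrp a b) (heq : ∑ i, D i = ∑ i, G i) : G = D := by
  obtain ⟨S, r, hr, hra, hG⟩ := exists_eq_add_ite_sub ha hD0 hDa hG0 hGa h
  have hsum : ∑ i, G i = ∑ i, D i + #S * a - b * r := by
    simp [hG, sum_add_distrib, sum_sub_distrib]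
  have hdvd : (a : ℤ) ∣ r * b := ⟨#S, by linarith⟩
  obtain ⟨m, rfl⟩ := (Nat.isCoprime_iff_coprime.mpr hab).dvd_of_dvd_mul_right hdvd
  have ha' : (0 : ℤ) < a := by exact_mod_cast ha
  have hm : m = 1 := by
    have h₁ := pos_of_mul_pos_right hr ha'.le
    have h₂ : (a : ℤ) * m ≤ a * 1 := by linarith
    have := le_of_mul_le_mul_left h₂ ha'
    omega
  subst hm
  have hcard : #S = b := by
    have : (#S : ℤ) * a = b * a := by linarith
    exact_mod_cast mul_right_cancel₀ ha'.ne' this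
  funext i
  simp [hG, eq_univ_of_card S (by simpa using hcard)]

end Cosets

section Skeletal

variable {a b k : ℕ}

/-- Some firing `S` takes `G` to `D + e` with a constant `e ≥ 0`. If `e = 0` then `G` is the
borrow of `S` on `D`; otherwise `S` is legal on `G`, and a `k`-stable firing of `G` lies strictly
between `D` and `G` in chip count, so we induct on the gap. -/
lemma KStable.exists_kStable_cborrow (ha : 0 < a) (hab : a.Coprime b) (hk : k < b)
    {D G : Fin b → ℤ} (hD : KStable a b k D) (hG : KStable a b k G) (h : G - D ∈ Kgrp a b)
    (hlt : ∑ i, D i < ∑ i, G i) :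
    ∃ T : Finset (Fin b), T.Nonempty ∧ KStable a b k (cborrow a b T D) := by
  induction hn : (∑ i, G i - ∑ i, D i).toNat using Nat.strong_induction_on generalizing G with
  | _ n ih =>
  obtain ⟨S, hS, e, he, hfire⟩ :=
    exists_cfire_eq_add_const ha hab hD.1 (hD.lt ha) hG.1 (hG.lt ha) h hlt
  rcases he.eq_or_lt with rfl | he
  · refine ⟨S, hS, ?_⟩
    rwa [show D = cfire a b S G from funext fun i => by simp [hfire], cborrow_cfire]
  obtain ⟨Y, hY, hW⟩ := hG.exists_kStable_cfire ha hab hk hS fun i => by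
    rw [hfire]; linarith [hD.1 i]
  have hsumS : ∑ i, cfire a b S G i = ∑ i, D i + b * e := by simp [hfire, sum_add_distrib]
  obtain ⟨-, hS_lt⟩ := sum_cfire_bounds hab hS G
  obtain ⟨hY_ge, hY_lt⟩ := sum_cfire_bounds hab hY G
  have hbe : (b : ℤ) ≤ b * e := le_mul_of_one_le_right (Int.natCast_nonneg b) he
  exact ih _ (by omega) hW (by simpa using add_mem (cfire_sub_mem_Kgrp hab hY G) h)
    (by linarith) rfl

lemma exists_kStable_sub_mem_Kgrp (hab : a.Coprime b) {D : Fin b → ℤ} (hD : ∀ i, 0 ≤ D i) :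
    ∃ E : Fin b → ℤ, KStable a b k E ∧ E - D ∈ Kgrp a b := by
  induction hn : (∑ i, D i).toNat using Nat.strong_induction_on generalizing D with
  | _ n ih =>
  by_cases hst : KStable a b k D
  · exact ⟨D, hst, by simp⟩
  obtain ⟨S, hS, -, hlegal⟩ : ∃ S : Finset (Fin b), S.Nonempty ∧ #S ≤ k + 1 ∧
      ∀ i, 0 ≤ cfire a b S D i := by
    simpa [KStable, hD] using hst
  have hlt := (sum_cfire_bounds hab hS D).2
  have hnonneg : 0 ≤ ∑ i, cfire a b S D i := sum_nonneg fun i _ => hlegal i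
  obtain ⟨E, hE, hEmem⟩ := ih _ (by omega) hlegal rfl
  exact ⟨E, hE, by simpa using add_mem hEmem (cfire_sub_mem_Kgrp hab hS D)⟩

lemma KStable.exists_kSkeletal_sub_mem_Kgrp (ha : 0 < a) (hab : a.Coprime b) {E : Fin b → ℤ}
    (hE : KStable a b k E) : ∃ F : Fin b → ℤ, KSkeletal a b k F ∧ F - E ∈ Kgrp a b := by
  induction hn : (b * a - ∑ i, E i).toNat using Nat.strong_induction_on generalizing E with
  | _ n ih =>
  by_cases hsk : KSkeletal a b k E
  · exact ⟨E, hsk, by simp⟩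
  obtain ⟨T, hT, -, hTst⟩ : ∃ T : Finset (Fin b), T.Nonempty ∧
      (∀ i, 0 ≤ cborrow a b T E i) ∧ KStable a b k (cborrow a b T E) := by
    simpa [KSkeletal, hE] using hsk
  have hlt : ∑ i, E i < ∑ i, cborrow a b T E i := by
    simpa using (sum_cfire_bounds hab hT (cborrow a b T E)).2
  have hle : ∑ i, cborrow a b T E i ≤ b * a :=
    (sum_le_sum fun i _ => (hTst.lt ha i).le).trans_eq (by simp)
  obtain ⟨F, hF, hFmem⟩ := ih _ (by omega) hTst rfl
  exact ⟨F, hF, by simpa using add_mem hFmem (cborrow_sub_mem_Kgrp hab hT E)⟩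

lemma KSkeletal.eq (ha : 0 < a) (hab : a.Coprime b) (hk : k < b) {D E : Fin b → ℤ}
    (hD : KSkeletal a b k D) (hE : KSkeletal a b k E) (h : E - D ∈ Kgrp a b) : E = D := by
  rcases lt_trichotomy (∑ i, D i) (∑ i, E i) with hlt | heq | hgt
  · obtain ⟨T, hT, hTst⟩ := hD.1.exists_kStable_cborrow ha hab hk hE.1 h hlt
    exact absurd hTst (hD.2 T hT hTst.1)
  · exact eq_of_sub_mem_Kgrp_of_sum_eq ha hab hD.1.1 (hD.1.lt ha) hE.1.1 (hE.1.lt ha) h heq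
  · obtain ⟨T, hT, hTst⟩ :=
      hE.1.exists_kStable_cborrow ha hab hk hD.1 (by simpa using neg_mem h) hgt
    exact absurd hTst (hE.2 T hT hTst.1)

end Skeletal

section Quotient

variable (a n : ℕ)

def coordDiffHom : (Fin (n + 1) → ℤ) →+ (Fin n → ZMod a) :=
  AddMonoidHom.mk' (fun D i => ((D i.succ - D 0 : ℤ) : ZMod a)) fun D E => by
    funext i
    push_cast [Pi.add_apply]
    ring

lemma coordDiffHom_ker : (coordDiffHom a n).ker = Kgrp a (n + 1) := by
  ext v
  rw [AddMonoidHom.mem_ker, mem_Kgrp_iff]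
  simp only [coordDiffHom, AddMonoidHom.mk'_apply, funext_iff, Pi.zero_apply,
    ZMod.intCast_zmod_eq_zero_iff_dvd]
  refine ⟨fun hv => ⟨v 0, Fin.cases (by simp) hv⟩, fun ⟨c, hc⟩ i => ?_⟩
  simpa using dvd_sub (hc i.succ) (hc 0)

lemma coordDiffHom_surjective : Function.Surjective (coordDiffHom a n) := by
  intro v
  choose u hu using fun i => ZMod.intCast_surjective (v i)
  exact ⟨Fin.cons 0 u, funext fun i => by simp [coordDiffHom, hu]⟩

noncomputable def quotientKgrpEquiv : ((Fin (n + 1) → ℤ) ⧸ Kgrp a (n + 1)) ≃+ (Fin n → ZMod a) :=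
  (QuotientAddGroup.quotientAddEquivOfEq (coordDiffHom_ker a n).symm).trans
    (QuotientAddGroup.quotientKerEquivOfSurjective _ (coordDiffHom_surjective a n))

end Quotient

theorem quotient_structure_general (a b k : ℕ) (ha : 0 < a)
    (hab : a.Coprime b) (hk : k < b) :
    Nonempty (((Fin b → ℤ) ⧸ Kgrp a b) ≃+ (Fin (b - 1) → ZMod a)) ∧
    (∀ D : Fin b → ℤ, ∃! D' : Fin b → ℤ, D' - D ∈ Kgrp a b ∧ KSkeletal a b k D') := by
  obtain ⟨n, rfl⟩ := Nat.exists_eq_add_one_of_ne_zero (by omega : b ≠ 0)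
  refine ⟨⟨quotientKgrpEquiv a n⟩, fun D => ?_⟩
  obtain ⟨R, hR0, hR⟩ := exists_nonneg_sub_mem_Kgrp ha D
  obtain ⟨E, hE, hER⟩ := exists_kStable_sub_mem_Kgrp (k := k) hab hR0
  obtain ⟨F, hF, hFE⟩ := hE.exists_kSkeletal_sub_mem_Kgrp ha hab
  have hFD : F - D ∈ Kgrp a (n + 1) := by simpa using add_mem (add_mem hFE hER) hR
  exact ⟨F, ⟨hFD, hF⟩, fun F' ⟨hF'D, hF'⟩ => hF.eq ha hab hk hF' (by simpa using sub_mem hF'D hFD)⟩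

/-- `ℤ^b / K ≅ (ℤ/aℤ)^{b−1}`, and every coset of `K` contains
exactly one `k`-skeletal configuration. -/
theorem quotient_structure (a b k : ℕ) (ha : 0 < a) (hb : 0 < b)
    (hab : a.Coprime b) (hk : k < b) :
    Nonempty (((Fin b → ℤ) ⧸ Kgrp a b) ≃+ (Fin (b - 1) → ZMod a)) ∧
    (∀ D : Fin b → ℤ, ∃! D' : Fin b → ℤ, D' - D ∈ Kgrp a b ∧ KSkeletal a b k D') :=
  quotient_structure_general a b k ha hab hk
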